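/- Dragomir's (p,q)-Bombieri inequality: Let x, y_1, ..., y_n be vectors in an inner product space (H, ⟨·,·⟩) over the real or complex field with not all ⟨x, y_i⟩ = 0 for i ∈ {1, ..., n}, and let p > 1, q > 1 with 1/p + 1/q = 1. Then ( ∑_{i=1}^n |⟨x, y_i⟩|² )² / [ ( ∑_{i=1}^n |⟨x, y_i⟩|^p )^{1/p} ( ∑_{i=1}^n |⟨x, y_i⟩|^q )^{1/q} ] ≤ ‖x‖² · max_{1≤i≤n} ( ∑_{j=1}^n |⟨y_i, y_j⟩| ). -/

import Mathlib

/-!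
Put `c i = ‖⟪x, y i⟫‖` and `z = ∑ i, conj ⟪x, y i⟫ • y i`. Then `⟪x, z⟫ = ∑ i, c i ^ 2`, so by
Cauchy–Schwarz `(∑ i, c i ^ 2) ^ 2 ≤ ‖x‖ ^ 2 ‖z‖ ^ 2`, and expanding `‖z‖ ^ 2` bounds it by the
bilinear form `∑ i j, c i c j ‖⟪y i, y j⟫‖`. The Schur test (Hölder's inequality over pairs
`(i, j)`, with the symmetric kernel split as `t ^ (1 / p) t ^ (1 / q)`) bounds that form by
`‖c‖_p ‖c‖_q` times the largest row sum of the kernel.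
-/

open Finset
open scoped InnerProductSpace ComplexConjugate

namespace Real

lemma mul_rpow_one_div_rpow {a s p : ℝ} (ha : 0 ≤ a) (hs : 0 ≤ s) (hp : p ≠ 0) :
    (a * s ^ (1 / p)) ^ p = a ^ p * s := by
  rw [mul_rpow ha (rpow_nonneg hs _), ← rpow_mul hs, one_div_mul_cancel hp, rpow_one]

variable {ι : Type*} [Fintype ι] {p q : ℝ} {a b : ι → ℝ} {t : ι → ι → ℝ}

theorem sum_sum_mul_mul_le_of_holderConjugate (hpq : p.HolderConjugate q) (ha : 0 ≤ a)
    (hb : 0 ≤ b) (ht : ∀ i j, 0 ≤ t i j) :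
    ∑ i, ∑ j, a i * b j * t i j ≤
      (∑ i, a i ^ p * ∑ j, t i j) ^ (1 / p) * (∑ j, b j ^ q * ∑ i, t i j) ^ (1 / q) := by
  have hsplit : ∀ i j, a i * b j * t i j = (a i * t i j ^ (1 / p)) * (b j * t i j ^ (1 / q)) := by
    intro i j
    rw [mul_mul_mul_comm, ← rpow_add' (ht i j) (by rw [hpq.one_div_add_one_div]; simp),
      hpq.one_div_add_one_div, div_one, rpow_one]
  have holder := inner_le_Lp_mul_Lq_of_nonneg (s := univ ×ˢ univ) hpq
    (f := fun ij : ι × ι => a ij.1 * t ij.1 ij.2 ^ (1 / p))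
    (g := fun ij => b ij.2 * t ij.1 ij.2 ^ (1 / q))
    (fun ij _ => mul_nonneg (ha _) (rpow_nonneg (ht _ _) _))
    (fun ij _ => mul_nonneg (hb _) (rpow_nonneg (ht _ _) _))
  simp only [mul_rpow_one_div_rpow (ha _) (ht _ _) hpq.ne_zero,
    mul_rpow_one_div_rpow (hb _) (ht _ _) hpq.symm.ne_zero, sum_product, ← hsplit] at holder
  rwa [sum_comm (s := univ) (f := fun i j => b j ^ q * t i j),
    ← sum_congr rfl fun i _ => mul_sum .., ← sum_congr rfl fun j _ => mul_sum ..] at holder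

/-- The **Schur test**. -/
theorem sum_sum_mul_mul_le_of_sum_le (hpq : p.HolderConjugate q) (ha : 0 ≤ a)
    (hb : 0 ≤ b) (ht : ∀ i j, 0 ≤ t i j) {M : ℝ} (hM : 0 ≤ M) (hrow : ∀ i, ∑ j, t i j ≤ M)
    (hcol : ∀ j, ∑ i, t i j ≤ M) :
    ∑ i, ∑ j, a i * b j * t i j ≤ (∑ i, a i ^ p) ^ (1 / p) * (∑ j, b j ^ q) ^ (1 / q) * M := by
  have hsum : ∀ (r : ℝ) (c s : ι → ℝ), 0 ≤ c → (∀ i, s i ≤ M) →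
      ∑ i, c i ^ r * s i ≤ (∑ i, c i ^ r) * M := fun r c s hc hs => by
    rw [sum_mul]; gcongr with i; exacts [rpow_nonneg (hc i) r, hs i]
  have hA : 0 ≤ ∑ i, a i ^ p := sum_nonneg fun i _ => rpow_nonneg (ha i) p
  have hB : 0 ≤ ∑ j, b j ^ q := sum_nonneg fun j _ => rpow_nonneg (hb j) q
  have hp := hpq.one_div_nonneg
  have hq := hpq.symm.one_div_nonneg
  calc ∑ i, ∑ j, a i * b j * t i j
      ≤ (∑ i, a i ^ p * ∑ j, t i j) ^ (1 / p) * (∑ j, b j ^ q * ∑ i, t i j) ^ (1 / q) :=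
        sum_sum_mul_mul_le_of_holderConjugate hpq ha hb ht
    _ ≤ ((∑ i, a i ^ p) * M) ^ (1 / p) * ((∑ j, b j ^ q) * M) ^ (1 / q) := by
        have : 0 ≤ ∑ i, a i ^ p * ∑ j, t i j :=
          sum_nonneg fun i _ => mul_nonneg (rpow_nonneg (ha i) p) (sum_nonneg fun j _ => ht i j)
        have : 0 ≤ ∑ j, b j ^ q * ∑ i, t i j :=
          sum_nonneg fun j _ => mul_nonneg (rpow_nonneg (hb j) q) (sum_nonneg fun i _ => ht i j)
        gcongr
        exacts [hsum p a _ ha hrow, hsum q b _ hb hcol]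
    _ = (∑ i, a i ^ p) ^ (1 / p) * (∑ j, b j ^ q) ^ (1 / q) * M := by
        rw [mul_rpow hA hM, mul_rpow hB hM, mul_mul_mul_comm,
          ← rpow_add' hM (by rw [hpq.one_div_add_one_div]; simp),
          hpq.one_div_add_one_div, div_one, rpow_one]

end Real

section InnerProduct

variable {𝕜 H ι : Type*} [RCLike 𝕜] [NormedAddCommGroup H] [InnerProductSpace 𝕜 H] [Fintype ι]

theorem norm_sum_smul_sq_le (a : ι → 𝕜) (y : ι → H) :
    ‖∑ i, a i • y i‖ ^ 2 ≤ ∑ i, ∑ j, ‖a i‖ * ‖a j‖ * ‖⟪y i, y j⟫_𝕜‖ := by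
  have hexpand :
      ⟪∑ i, a i • y i, ∑ j, a j • y j⟫_𝕜 = ∑ i, ∑ j, conj (a i) * a j * ⟪y i, y j⟫_𝕜 := by
    rw [sum_inner]
    simp only [inner_smul_left, inner_sum, inner_smul_right, mul_assoc, mul_left_comm]
  calc ‖∑ i, a i • y i‖ ^ 2 = RCLike.re ⟪∑ i, a i • y i, ∑ j, a j • y j⟫_𝕜 := norm_sq_eq_re_inner _
    _ ≤ ‖⟪∑ i, a i • y i, ∑ j, a j • y j⟫_𝕜‖ := RCLike.re_le_norm _
    _ ≤ ∑ i, ∑ j, ‖a i‖ * ‖a j‖ * ‖⟪y i, y j⟫_𝕜‖ := by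
        rw [hexpand]
        refine (norm_sum_le _ _).trans (sum_le_sum fun i _ => (norm_sum_le _ _).trans_eq ?_)
        simp only [norm_mul, RCLike.norm_conj]

theorem inner_sum_conj_inner_smul (x : H) (y : ι → H) :
    ⟪x, ∑ i, conj ⟪x, y i⟫_𝕜 • y i⟫_𝕜 = ((∑ i, ‖⟪x, y i⟫_𝕜‖ ^ 2 : ℝ) : 𝕜) := by
  push_cast
  simp only [inner_sum, inner_smul_right, RCLike.conj_mul]

theorem sq_sum_norm_inner_sq_le (x : H) (y : ι → H) :
    (∑ i, ‖⟪x, y i⟫_𝕜‖ ^ 2) ^ 2 ≤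
      ‖x‖ ^ 2 * ∑ i, ∑ j, ‖⟪x, y i⟫_𝕜‖ * ‖⟪x, y j⟫_𝕜‖ * ‖⟪y i, y j⟫_𝕜‖ := by
  set z := ∑ i, conj ⟪x, y i⟫_𝕜 • y i
  have hxz : ∑ i, ‖⟪x, y i⟫_𝕜‖ ^ 2 ≤ ‖x‖ * ‖z‖ := by
    calc ∑ i, ‖⟪x, y i⟫_𝕜‖ ^ 2 = ‖⟪x, z⟫_𝕜‖ := by
          rw [inner_sum_conj_inner_smul, RCLike.norm_ofReal, abs_of_nonneg (by positivity)]
      _ ≤ ‖x‖ * ‖z‖ := norm_inner_le_norm x z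
  have hz : ‖z‖ ^ 2 ≤ ∑ i, ∑ j, ‖⟪x, y i⟫_𝕜‖ * ‖⟪x, y j⟫_𝕜‖ * ‖⟪y i, y j⟫_𝕜‖ := by
    simpa only [RCLike.norm_conj] using norm_sum_smul_sq_le (fun i => conj ⟪x, y i⟫_𝕜) y
  calc (∑ i, ‖⟪x, y i⟫_𝕜‖ ^ 2) ^ 2 ≤ (‖x‖ * ‖z‖) ^ 2 := by gcongr
    _ = ‖x‖ ^ 2 * ‖z‖ ^ 2 := mul_pow _ _ _
    _ ≤ _ := by gcongr

end InnerProduct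

theorem dragomir_pq_bombieri_general {𝕜 H : Type*} [RCLike 𝕜] [NormedAddCommGroup H]
    [InnerProductSpace 𝕜 H] {n : ℕ} (hn : 0 < n) (x : H) (y : Fin n → H)
    {p q : ℝ} (hp : 1 < p)
    (hpq : 1 / p + 1 / q = 1) :
    (∑ i, ‖(inner 𝕜 x (y i) : 𝕜)‖ ^ 2) ^ 2 /
        ((∑ i, ‖(inner 𝕜 x (y i) : 𝕜)‖ ^ p) ^ (1 / p) *
          (∑ i, ‖(inner 𝕜 x (y i) : 𝕜)‖ ^ q) ^ (1 / q)) ≤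
      ‖x‖ ^ 2 *
        Finset.univ.sup' (Finset.univ_nonempty_iff.mpr (Fin.pos_iff_nonempty.mp hn))
          (fun i => ∑ j, ‖(inner 𝕜 (y i) (y j) : 𝕜)‖) := by
  have hconj : p.HolderConjugate q := Real.holderConjugate_iff.mpr ⟨hp, by simpa using hpq⟩
  set M := Finset.univ.sup' (Finset.univ_nonempty_iff.mpr (Fin.pos_iff_nonempty.mp hn))
    (fun i => ∑ j, ‖⟪y i, y j⟫_𝕜‖)
  have hrow : ∀ i, ∑ j, ‖⟪y i, y j⟫_𝕜‖ ≤ M := fun i =>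
    le_sup' (fun i => ∑ j, ‖⟪y i, y j⟫_𝕜‖) (mem_univ i)
  have hcol : ∀ j, ∑ i, ‖⟪y i, y j⟫_𝕜‖ ≤ M := fun j => by
    simpa only [norm_inner_symm (y _) (y j)] using hrow j
  have hM : 0 ≤ M := (sum_nonneg fun j _ => norm_nonneg _).trans (hrow ⟨0, hn⟩)
  have hschur := Real.sum_sum_mul_mul_le_of_sum_le hconj (a := fun i => ‖⟪x, y i⟫_𝕜‖)
    (b := fun i => ‖⟪x, y i⟫_𝕜‖) (fun _ => norm_nonneg _) (fun _ => norm_nonneg _)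
    (fun _ _ => norm_nonneg _) hM hrow hcol
  refine div_le_of_le_mul₀ (by positivity) (by positivity) ?_
  calc (∑ i, ‖⟪x, y i⟫_𝕜‖ ^ 2) ^ 2
      ≤ ‖x‖ ^ 2 * ∑ i, ∑ j, ‖⟪x, y i⟫_𝕜‖ * ‖⟪x, y j⟫_𝕜‖ * ‖⟪y i, y j⟫_𝕜‖ :=
        sq_sum_norm_inner_sq_le x y
    _ ≤ ‖x‖ ^ 2 * ((∑ i, ‖⟪x, y i⟫_𝕜‖ ^ p) ^ (1 / p) * (∑ i, ‖⟪x, y i⟫_𝕜‖ ^ q) ^ (1 / q) * M) :=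
        mul_le_mul_of_nonneg_left hschur (sq_nonneg _)
    _ = ‖x‖ ^ 2 * M * ((∑ i, ‖⟪x, y i⟫_𝕜‖ ^ p) ^ (1 / p) * (∑ i, ‖⟪x, y i⟫_𝕜‖ ^ q) ^ (1 / q)) := by
        ring

/-- Dragomir's (p,q)-Bombieri inequality. -/
theorem dragomir_pq_bombieri {𝕜 H : Type*} [RCLike 𝕜] [NormedAddCommGroup H]
    [InnerProductSpace 𝕜 H] {n : ℕ} (hn : 0 < n) (x : H) (y : Fin n → H)
    (hx : ∃ i, (inner 𝕜 x (y i) : 𝕜) ≠ 0) {p q : ℝ} (hp : 1 < p) (hq : 1 < q)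
    (hpq : 1 / p + 1 / q = 1) :
    (∑ i, ‖(inner 𝕜 x (y i) : 𝕜)‖ ^ 2) ^ 2 /
        ((∑ i, ‖(inner 𝕜 x (y i) : 𝕜)‖ ^ p) ^ (1 / p) *
          (∑ i, ‖(inner 𝕜 x (y i) : 𝕜)‖ ^ q) ^ (1 / q)) ≤
      ‖x‖ ^ 2 *
        Finset.univ.sup' (Finset.univ_nonempty_iff.mpr (Fin.pos_iff_nonempty.mp hn))
          (fun i => ∑ j, ‖(inner 𝕜 (y i) (y j) : 𝕜)‖) :=
  dragomir_pq_bombieri_general hn x y hp hpq
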